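/- Let X and Y be finite alphabets and let W, W̃ : X → P(Y) be channels with d(W,W̃) ≤ ε for some ε ∈ (0,1). For arbitrary n ∈ ℕ, let U be an arbitrary finite set, P_U the uniform distribution on U, and E(xⁿ|u) an arbitrary stochastic encoder (E(xⁿ|u) ≥ 0 with ∑_{xⁿ∈Xⁿ} E(xⁿ|u) = 1 for each u). Define the joint distributions P_{UYⁿ}(u,yⁿ) = ∑_{xⁿ} Wⁿ(yⁿ|xⁿ)E(xⁿ|u)P_U(u) and P̃_{UYⁿ}(u,yⁿ) = ∑_{xⁿ} W̃ⁿ(yⁿ|xⁿ)E(xⁿ|u)P_U(u). Then |I(U;Yⁿ‖P) − I(U;Yⁿ‖P̃)| ≤ n·(4ε·log|Y| + 4H₂(ε)). -/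

import Mathlib

open Real Finset

/-- Binary entropy function (base 2). -/
noncomputable def H2 (ε : ℝ) : ℝ :=
  -(ε * Real.logb 2 ε) - (1 - ε) * Real.logb 2 (1 - ε)

/-- `p` is a probability distribution on the finite alphabet `α`. -/
def IsProb {α : Type*} [Fintype α] (p : α → ℝ) : Prop :=
  (∀ a, 0 ≤ p a) ∧ ∑ a, p a = 1

/-- `W` is a channel (stochastic matrix) from `X` to `Y`. -/
def IsChannel {X Y : Type*} [Fintype Y] (W : X → Y → ℝ) : Prop :=
  ∀ x, (∀ y, 0 ≤ W x y) ∧ ∑ y, W x y = 1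

/-- Conditional entropy `H(Y|X‖P)` (base 2) of a joint distribution `P` on `X × Y`. -/
noncomputable def condEnt {X Y : Type*} [Fintype X] [Fintype Y] (P : X × Y → ℝ) : ℝ :=
  -∑ x : X, ∑ y : Y, P (x, y) * Real.logb 2 (P (x, y) / ∑ y' : Y, P (x, y'))

/-- Mutual information `I(U;Y‖P)` (base 2) of a joint distribution `P` on `U × Y`. -/
noncomputable def mutInf {U Y : Type*} [Fintype U] [Fintype Y] (P : U × Y → ℝ) : ℝ :=
  ∑ u : U, ∑ y : Y,
    P (u, y) * Real.logb 2 (P (u, y) / ((∑ y' : Y, P (u, y')) * ∑ u' : U, P (u', y)))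

/-- Channel distance `d(W,W') = max_x ∑_y |W(y|x) − W'(y|x)|`. -/
noncomputable def dChan {X Y : Type*} [Fintype Y] (W W' : X → Y → ℝ) : ℝ :=
  ⨆ x : X, ∑ y : Y, |W x y - W' x y|

/-- Joint distribution on `U × Yⁿ` induced by the uniform distribution on `U`, a stochastic
encoder `E` and the `n`-fold memoryless extension of the channel `W`. -/
noncomputable def jointOut {X Y U : Type*} [Fintype X] [Fintype U] (n : ℕ)
    (W : X → Y → ℝ) (E : U → (Fin n → X) → ℝ) : U × (Fin n → Y) → ℝ :=
  fun p => ∑ xn : Fin n → X,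
    (∏ i : Fin n, W (xn i) (p.2 i)) * E p.1 xn * ((Fintype.card U : ℝ))⁻¹

/-!
Write `I(U;Yⁿ) = H(U) + H(Yⁿ) - H(U,Yⁿ)`, with entropies in nats. Switching the channel from `W'`
to `W` one letter at a time (a hybrid argument), it suffices to bound the change when only the
`k`-th use of the channel changes; `H(U)` does not change. Given the other outputs (and `U`, for
the joint entropy), the `k`-th output law moves in `ℓ¹` by at most `ε` times its mass, because it
is a mixture of rows of `W` resp. `W'`. Fannes' inequality, applied conditionally, then bounds the
change of both `H(Yⁿ)` and `H(U,Yⁿ)` by `2 ε log |Y| + h(ε)`.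
-/

open Function

lemma neg_mul_log_le_negMulLog {x S : ℝ} (hx : 0 ≤ x) (hxS : x ≤ S) :
    -(x * log S) ≤ negMulLog x := by
  rcases hx.eq_or_lt with rfl | hx
  · simp
  rw [negMulLog, neg_mul, neg_le_neg_iff]
  exact mul_le_mul_of_nonneg_left (log_le_log hx hxS) hx.le

lemma negMulLog_add_le {x y : ℝ} (hx : 0 ≤ x) (hy : 0 ≤ y) :
    negMulLog (x + y) ≤ negMulLog x + negMulLog y :=
  calc negMulLog (x + y) = -(x * log (x + y)) + -(y * log (x + y)) := by
        rw [negMulLog]; ring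
    _ ≤ negMulLog x + negMulLog y :=
        add_le_add (neg_mul_log_le_negMulLog hx (by linarith))
          (neg_mul_log_le_negMulLog hy (by linarith))

lemma mul_negMulLog_div {c : ℝ} (hc : 0 < c) (x : ℝ) :
    c * negMulLog (x / c) = negMulLog x + x * log c := by
  rw [div_eq_mul_inv, negMulLog_mul]
  simp only [negMulLog, log_inv]
  field_simp

/-- The two-term log-sum inequality, i.e. concavity of the perspective of `negMulLog`. -/
lemma mul_negMulLog_div_add_mul_negMulLog_div_le {x y a b : ℝ} (hx : 0 ≤ x) (hy : 0 ≤ y)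
    (ha : 0 < a) (hb : 0 < b) :
    a * negMulLog (x / a) + b * negMulLog (y / b) ≤ (a + b) * negMulLog ((x + y) / (a + b)) := by
  have hab : 0 < a + b := by positivity
  have h := concaveOn_negMulLog.2 (Set.mem_Ici.2 (div_nonneg hx ha.le))
    (Set.mem_Ici.2 (div_nonneg hy hb.le)) (div_nonneg ha.le hab.le) (div_nonneg hb.le hab.le)
    (by rw [← add_div, div_self hab.ne'])
  have harg : a / (a + b) * (x / a) + b / (a + b) * (y / b) = (x + y) / (a + b) := by
    field_simp
  simp only [smul_eq_mul, harg] at h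
  have := mul_le_mul_of_nonneg_left h hab.le
  calc a * negMulLog (x / a) + b * negMulLog (y / b)
      = (a + b) * (a / (a + b) * negMulLog (x / a) + b / (a + b) * negMulLog (y / b)) := by
        field_simp
    _ ≤ _ := this

lemma negMulLog_sum_le {α : Type*} [Fintype α] {f : α → ℝ} (hf : 0 ≤ f) :
    negMulLog (∑ a, f a) ≤ ∑ a, negMulLog (f a) :=
  calc negMulLog (∑ a, f a) = ∑ a, -(f a * log (∑ b, f b)) := by
        rw [negMulLog, sum_neg_distrib, ← sum_mul, neg_mul]
    _ ≤ ∑ a, negMulLog (f a) := sum_le_sum fun a _ =>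
        neg_mul_log_le_negMulLog (hf a) (single_le_sum (fun b _ => hf b) (mem_univ a))

lemma mul_binEntropy_div {M : ℝ} (hM : 0 < M) (t : ℝ) :
    M * binEntropy (t / M) = negMulLog t + negMulLog (M - t) - negMulLog M := by
  have h := mul_negMulLog_div hM (M - t)
  rw [sub_div, div_self hM.ne'] at h
  rw [binEntropy_eq_negMulLog_add_negMulLog_one_sub, mul_add, mul_negMulLog_div hM, h]
  simp only [negMulLog]
  ring

lemma binEntropy_le_mul_log_two_add {v ε : ℝ} (hv : 0 ≤ v) (hvε : v ≤ ε) (hε : ε ≤ 1) :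
    binEntropy v ≤ ε * log 2 + binEntropy ε := by
  rcases le_or_gt ε 2⁻¹ with hε2 | hε2
  · have := binEntropy_strictMonoOn.monotoneOn ⟨hv, hvε.trans hε2⟩ ⟨hv.trans hvε, hε2⟩ hvε
    have : 0 ≤ ε * log 2 := mul_nonneg (hv.trans hvε) (log_nonneg one_le_two)
    linarith
  · have hη : (1 - ε) * log 2 ≤ negMulLog (1 - ε) := by
      have := neg_mul_log_le_negMulLog (x := 1 - ε) (S := 2⁻¹) (by linarith) (by linarith)
      rwa [log_inv, mul_neg, neg_neg] at this
    have := negMulLog_nonneg (x := ε) (by linarith) hε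
    rw [binEntropy_eq_negMulLog_add_negMulLog_one_sub ε]
    linarith [binEntropy_le_log_two (p := v)]

lemma mul_log_add_mul_binEntropy_div_le {t M ε L : ℝ} (ht : 0 ≤ t) (hM : 0 ≤ M)
    (htM : t ≤ ε * M) (hε : ε ≤ 1) (hL : log 2 ≤ L) :
    t * L + M * binEntropy (t / M) ≤ M * (2 * ε * L + binEntropy ε) := by
  rcases hM.eq_or_lt with rfl | hM
  · simp [show t = 0 by linarith]
  have hv : t / M ≤ ε := (div_le_iff₀ hM).2 (by linarith)
  have hε0 : 0 ≤ ε := (div_nonneg ht hM.le).trans hv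
  have hh := binEntropy_le_mul_log_two_add (div_nonneg ht hM.le) hv hε
  have hL0 : 0 ≤ L := (log_nonneg one_le_two).trans hL
  calc t * L + M * binEntropy (t / M) = M * (t / M * L + binEntropy (t / M)) := by
        field_simp
    _ ≤ M * (2 * ε * L + binEntropy ε) := by
        refine mul_le_mul_of_nonneg_left ?_ hM.le
        nlinarith [mul_le_mul_of_nonneg_right hv hL0, mul_le_mul_of_nonneg_left hL hε0]

lemma H2_eq_binEntropy_div_log_two (ε : ℝ) : H2 ε = binEntropy ε / log 2 := by
  simp only [H2, binEntropy, logb, log_inv]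
  ring

noncomputable def entropy {α : Type*} [Fintype α] (p : α → ℝ) : ℝ := ∑ a, negMulLog (p a)

section Entropy

variable {α : Type*} [Fintype α] {p q : α → ℝ}

lemma entropy_comp_equiv {β : Type*} [Fintype β] (e : β ≃ α) (p : α → ℝ) :
    entropy (fun b => p (e b)) = entropy p :=
  e.sum_comp fun a => negMulLog (p a)

lemma entropy_add_le (hp : 0 ≤ p) (hq : 0 ≤ q) :
    entropy (p + q) ≤ entropy p + entropy q := by
  rw [entropy, entropy, entropy, ← sum_add_distrib]
  exact sum_le_sum fun a _ => negMulLog_add_le (hp a) (hq a)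

lemma entropy_add_entropy_le (hp : 0 ≤ p) (hq : 0 ≤ q) :
    entropy p + entropy q + negMulLog (∑ a, p a + ∑ a, q a) ≤
      entropy (p + q) + negMulLog (∑ a, p a) + negMulLog (∑ a, q a) := by
  rcases (sum_nonneg fun a _ => hp a : 0 ≤ ∑ a, p a).eq_or_lt with hF | hF
  · rw [(Fintype.sum_eq_zero_iff_of_nonneg hp).1 hF.symm]
    simp [entropy]
  rcases (sum_nonneg fun a _ => hq a : 0 ≤ ∑ a, q a).eq_or_lt with hG | hG
  · rw [(Fintype.sum_eq_zero_iff_of_nonneg hq).1 hG.symm]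
    simp [entropy]
  have key : ∀ a, negMulLog (p a) + negMulLog (q a) + p a * log (∑ a, p a) +
      q a * log (∑ a, q a) ≤
      negMulLog (p a + q a) + (p a + q a) * log (∑ a, p a + ∑ a, q a) := fun a => by
    have h := mul_negMulLog_div_add_mul_negMulLog_div_le (hp a) (hq a) hF hG
    rw [mul_negMulLog_div hF, mul_negMulLog_div hG, mul_negMulLog_div (by positivity)] at h
    linarith
  have := sum_le_sum fun a (_ : a ∈ univ) => key a
  simp only [sum_add_distrib, ← sum_mul] at this
  have hη (x : ℝ) : negMulLog x = -(x * log x) := by simp [negMulLog]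
  simp only [entropy, Pi.add_apply]
  rw [hη (∑ a, p a), hη (∑ a, q a), hη (∑ a, p a + ∑ a, q a)]
  linarith

lemma entropy_le_negMulLog_sum_add (hp : 0 ≤ p) :
    entropy p ≤ negMulLog (∑ a, p a) + (∑ a, p a) * log (Fintype.card α) := by
  rcases isEmpty_or_nonempty α with hα | hα
  · simp [entropy]
  have hN : (0 : ℝ) < Fintype.card α := Nat.cast_pos.2 Fintype.card_pos
  have jensen := concaveOn_negMulLog.le_map_sum (t := univ) (w := fun _ => (Fintype.card α : ℝ)⁻¹)
    (p := p) (fun _ _ => inv_nonneg.2 hN.le) (by simp [hN.ne'])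
    (fun a _ => Set.mem_Ici.2 (hp a))
  simp only [smul_eq_mul, inv_mul_eq_div, ← sum_div] at jensen
  rw [← mul_negMulLog_div hN]
  calc entropy p = (Fintype.card α : ℝ) * (entropy p / Fintype.card α) := by field_simp
    _ ≤ _ := mul_le_mul_of_nonneg_left jensen hN.le

/-- Fannes' inequality for weight vectors of equal mass. -/
lemma entropy_sub_entropy_le (hp : 0 ≤ p) (hq : 0 ≤ q) (hpq : ∑ a, p a = ∑ a, q a) :
    entropy p - entropy q ≤ (∑ a, |p a - q a|) / 2 * log (Fintype.card α) +
      (∑ a, p a) * binEntropy ((∑ a, |p a - q a|) / 2 / ∑ a, p a) := by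
  -- `p = m + r` and `q = m + s` with `m = min p q`: subadditivity bounds `entropy p` from above,
  -- the log-sum inequality bounds `entropy q` from below; `r` and `s` both have mass
  -- `(∑ a, |p a - q a|) / 2`.
  set m : α → ℝ := fun a => min (p a) (q a)
  set r := p - m
  set s := q - m
  have hm : 0 ≤ m := fun a => le_min (hp a) (hq a)
  have hr : 0 ≤ r := fun a => sub_nonneg.2 (min_le_left _ _)
  have hs : 0 ≤ s := fun a => sub_nonneg.2 (min_le_right _ _)
  have habs : ∀ a, |p a - q a| = r a + s a := fun a => by
    simp only [r, s, m, Pi.sub_apply]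
    rcases le_total (p a) (q a) with h | h
    · rw [min_eq_left h, abs_of_nonpos (by linarith)]; ring
    · rw [min_eq_right h, abs_of_nonneg (by linarith)]; ring
  have hrs : ∑ a, r a = ∑ a, s a := by
    simp only [r, s, Pi.sub_apply, sum_sub_distrib, hpq]
  have ht : (∑ a, |p a - q a|) / 2 = ∑ a, r a := by
    rw [sum_congr rfl fun a _ => habs a, sum_add_distrib, ← hrs]; ring
  have hmt : ∑ a, m a = ∑ a, p a - ∑ a, r a := by
    simp only [r, Pi.sub_apply, sum_sub_distrib]; ring
  have hpm : p = m + r := by simp [r]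
  have hqm : q = m + s := by simp [s]
  have h1 : entropy p ≤ entropy m + entropy r := hpm ▸ entropy_add_le hm hr
  have h2 := entropy_add_entropy_le hm hs
  have h3 := entropy_le_negMulLog_sum_add hr
  have h4 : negMulLog (∑ a, s a) ≤ entropy s := negMulLog_sum_le hs
  rw [← hqm, ← hrs, hmt, sub_add_cancel] at h2
  rw [← hrs] at h4
  have hrp : ∑ a, r a ≤ ∑ a, p a := by linarith [sum_nonneg fun a (_ : a ∈ univ) => hm a]
  rw [ht]
  rcases (sum_nonneg fun a _ => hr a : 0 ≤ ∑ a, r a).eq_or_lt with h0 | h0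
  · rw [← h0] at h2 h3 h4 ⊢
    simp only [negMulLog_zero, sub_zero, zero_mul, add_zero] at h2 h3 h4
    simp only [zero_mul, zero_div, binEntropy_zero, mul_zero, add_zero]
    linarith
  rw [mul_binEntropy_div (h0.trans_le hrp)]
  linarith

lemma abs_entropy_sub_entropy_le (hp : 0 ≤ p) (hq : 0 ≤ q) (hpq : ∑ a, p a = ∑ a, q a) :
    |entropy p - entropy q| ≤ (∑ a, |p a - q a|) / 2 * log (Fintype.card α) +
      (∑ a, p a) * binEntropy ((∑ a, |p a - q a|) / 2 / ∑ a, p a) := by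
  refine abs_sub_le_iff.2 ⟨entropy_sub_entropy_le hp hq hpq, ?_⟩
  simpa only [abs_sub_comm (q _), hpq] using entropy_sub_entropy_le hq hp hpq.symm

lemma abs_entropy_sub_le_of_sum_abs_sub_le (hp : 0 ≤ p) (hq : 0 ≤ q)
    (hpq : ∑ a, p a = ∑ a, q a) {ε : ℝ} (hε0 : 0 ≤ ε) (hε1 : ε ≤ 1)
    (hdist : ∑ a, |p a - q a| ≤ ε * ∑ a, p a) :
    |entropy p - entropy q| ≤ (∑ a, p a) * (2 * ε * log (Fintype.card α) + binEntropy ε) := by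
  rcases subsingleton_or_nontrivial α with hα | hα
  · obtain rfl : p = q := funext fun a => by
      simpa only [Fintype.sum_subsingleton _ a] using hpq
    rw [sub_self, abs_zero]
    exact mul_nonneg (sum_nonneg fun a _ => hp a) (add_nonneg
      (mul_nonneg (by positivity) (log_natCast_nonneg _)) (binEntropy_nonneg hε0 hε1))
  refine (abs_entropy_sub_entropy_le hp hq hpq).trans
    (mul_log_add_mul_binEntropy_div_le (by positivity) (sum_nonneg fun a _ => hp a)
      (by linarith [mul_nonneg hε0 (sum_nonneg fun a (_ : a ∈ univ) => hp a)]) hε1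
      (log_le_log two_pos (by exact_mod_cast Fintype.one_lt_card)))

end Entropy

section Channel

variable {X Y : Type*} [Fintype Y] {W W' : X → Y → ℝ} {ε : ℝ}

lemma sum_abs_sub_le_dChan [Finite X] (W W' : X → Y → ℝ) (x : X) :
    ∑ y, |W x y - W' x y| ≤ dChan W W' :=
  le_ciSup (f := fun x => ∑ y, |W x y - W' x y|) (Set.finite_range _).bddAbove x

lemma IsChannel.sum_sum_mul (hW : IsChannel W) {I : Type*} [Fintype I] (G : I → X)
    (T : I → ℝ) : ∑ a, ∑ i, W (G i) a * T i = ∑ i, T i := by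
  rw [sum_comm]
  simp only [← sum_mul, (hW _).2, one_mul]

lemma sum_abs_sum_mul_sub_sum_mul_le (hd : ∀ x, ∑ y, |W x y - W' x y| ≤ ε)
    {I : Type*} [Fintype I] (G : I → X) {T : I → ℝ} (hT : 0 ≤ T) :
    ∑ a, |∑ i, W (G i) a * T i - ∑ i, W' (G i) a * T i| ≤ ε * ∑ i, T i :=
  calc ∑ a, |∑ i, W (G i) a * T i - ∑ i, W' (G i) a * T i|
      = ∑ a, |∑ i, (W (G i) a - W' (G i) a) * T i| := by
        simp only [sub_mul, sum_sub_distrib]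
    _ ≤ ∑ a, ∑ i, |W (G i) a - W' (G i) a| * T i := sum_le_sum fun a _ =>
        (abs_sum_le_sum_abs _ _).trans_eq (sum_congr rfl fun i _ => by
          rw [abs_mul, abs_of_nonneg (hT i)])
    _ = ∑ i, (∑ a, |W (G i) a - W' (G i) a|) * T i := by
        rw [sum_comm]; simp only [sum_mul]
    _ ≤ ∑ i, ε * T i := sum_le_sum fun i _ => mul_le_mul_of_nonneg_right (hd (G i)) (hT i)
    _ = ε * ∑ i, T i := (mul_sum _ _ _).symm

lemma abs_entropy_channel_sub_le (hW : IsChannel W) (hW' : IsChannel W')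
    (hd : ∀ x, ∑ y, |W x y - W' x y| ≤ ε) (hε0 : 0 ≤ ε) (hε1 : ε ≤ 1)
    {Z I : Type*} [Fintype Z] [Fintype I] (G : I → X) {S : Z → I → ℝ} (hS : ∀ z, 0 ≤ S z) :
    |entropy (fun q : Y × Z => ∑ i, W (G i) q.1 * S q.2 i) -
        entropy (fun q : Y × Z => ∑ i, W' (G i) q.1 * S q.2 i)| ≤
      (∑ z, ∑ i, S z i) * (2 * ε * log (Fintype.card Y) + binEntropy ε) := by
  have hrow (z : Z) := abs_entropy_sub_le_of_sum_abs_sub_le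
    (p := fun a => ∑ i, W (G i) a * S z i) (q := fun a => ∑ i, W' (G i) a * S z i)
    (fun a => sum_nonneg fun i _ => mul_nonneg ((hW _).1 a) (hS z i))
    (fun a => sum_nonneg fun i _ => mul_nonneg ((hW' _).1 a) (hS z i))
    (by rw [hW.sum_sum_mul, hW'.sum_sum_mul]) hε0 hε1
    (by rw [hW.sum_sum_mul]; exact sum_abs_sum_mul_sub_sum_mul_le hd G (hS z))
  simp only [hW.sum_sum_mul] at hrow
  rw [entropy, entropy, Fintype.sum_prod_type_right, Fintype.sum_prod_type_right,
    ← sum_sub_distrib, sum_mul]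
  exact (abs_sum_le_sum_abs _ _).trans (sum_le_sum fun z _ => hrow z)

end Channel

section MutualInformation

variable {U Y : Type*} [Fintype U] [Fintype Y]

lemma mutInf_eq_entropy {P : U × Y → ℝ} (hP : 0 ≤ P) :
    mutInf P = (entropy (fun u => ∑ y, P (u, y)) + entropy (fun y => ∑ u, P (u, y)) -
      entropy P) / log 2 := by
  have hterm (u : U) (y : Y) : P (u, y) * logb 2 (P (u, y) / ((∑ y', P (u, y')) * ∑ u', P (u', y)))
      = (-negMulLog (P (u, y)) - P (u, y) * log (∑ y', P (u, y')) -
          P (u, y) * log (∑ u', P (u', y))) / log 2 := by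
    rcases (hP (u, y)).eq_or_lt with h | h
    · simp [← h]
    have hA := h.trans_le (single_le_sum (fun y' _ => hP (u, y')) (mem_univ y))
    have hB := h.trans_le (single_le_sum (fun u' _ => hP (u', y)) (mem_univ u))
    rw [logb, log_div h.ne' (mul_pos hA hB).ne', log_mul hA.ne' hB.ne', negMulLog]
    ring
  have hU : ∑ u, ∑ y, P (u, y) * log (∑ y', P (u, y')) = -entropy (fun u => ∑ y, P (u, y)) := by
    rw [entropy, ← sum_neg_distrib]
    exact sum_congr rfl fun u _ => by rw [← sum_mul, negMulLog]; ring
  have hY : ∑ u, ∑ y, P (u, y) * log (∑ u', P (u', y)) = -entropy (fun y => ∑ u, P (u, y)) := by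
    rw [sum_comm, entropy, ← sum_neg_distrib]
    exact sum_congr rfl fun y _ => by rw [← sum_mul, negMulLog]; ring
  have hUY : entropy P = ∑ u, ∑ y, negMulLog (P (u, y)) := Fintype.sum_prod_type _
  simp only [mutInf, hterm, ← sum_div, sum_sub_distrib, sum_neg_distrib, hU, hY, hUY]
  ring

lemma mutInf_comp_equiv {Y' : Type*} [Fintype Y'] (e : Y' ≃ Y) (P : U × Y → ℝ) :
    mutInf (fun p : U × Y' => P (p.1, e p.2)) = mutInf P := by
  have h (u : U) : ∑ y', P (u, e y') = ∑ y, P (u, y) := e.sum_comp fun y => P (u, y)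
  simp only [mutInf, h]
  exact sum_congr rfl fun u _ => e.sum_comp
    (fun y => P (u, y) * logb 2 (P (u, y) / ((∑ y', P (u, y')) * ∑ u', P (u', y))))

end MutualInformation

section SingleUse

variable {U X Y Z I : Type*} [Fintype U] [Fintype Y] [Fintype Z] [Fintype I]
  {W W' : X → Y → ℝ} {ε : ℝ}

lemma abs_mutInf_channel_sub_le (hW : IsChannel W) (hW' : IsChannel W')
    (hd : ∀ x, ∑ y, |W x y - W' x y| ≤ ε) (hε0 : 0 ≤ ε) (hε1 : ε ≤ 1)
    (G : I → X) {S : U → Z → I → ℝ} (hS : ∀ u z, 0 ≤ S u z) :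
    |mutInf (fun p : U × (Y × Z) => ∑ i, W (G i) p.2.1 * S p.1 p.2.2 i) -
        mutInf (fun p : U × (Y × Z) => ∑ i, W' (G i) p.2.1 * S p.1 p.2.2 i)| ≤
      2 * (∑ u, ∑ z, ∑ i, S u z i) * (2 * ε * log (Fintype.card Y) + binEntropy ε) / log 2 := by
  set B := 2 * ε * log (Fintype.card Y) + binEntropy ε
  set M := ∑ u, ∑ z, ∑ i, S u z i
  have hP {V : X → Y → ℝ} (hV : IsChannel V) :
      0 ≤ fun p : U × (Y × Z) => ∑ i, V (G i) p.2.1 * S p.1 p.2.2 i :=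
    fun p => sum_nonneg fun i _ => mul_nonneg ((hV _).1 _) (hS _ _ i)
  have hmargU {V : X → Y → ℝ} (hV : IsChannel V) (u : U) :
      ∑ q : Y × Z, ∑ i, V (G i) q.1 * S u q.2 i = ∑ z, ∑ i, S u z i := by
    rw [Fintype.sum_prod_type_right]
    exact sum_congr rfl fun z _ => hV.sum_sum_mul G (S u z)
  have hY : |entropy (fun q : Y × Z => ∑ u, ∑ i, W (G i) q.1 * S u q.2 i) -
      entropy (fun q : Y × Z => ∑ u, ∑ i, W' (G i) q.1 * S u q.2 i)| ≤ M * B := by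
    have h := abs_entropy_channel_sub_le hW hW' hd hε0 hε1 (G ∘ Prod.snd)
      (S := fun z (ui : U × I) => S ui.1 z ui.2) fun z ui => hS ui.1 z ui.2
    simp only [Function.comp_apply, Fintype.sum_prod_type] at h
    rwa [sum_comm] at h
  have hUY : |entropy (fun p : U × (Y × Z) => ∑ i, W (G i) p.2.1 * S p.1 p.2.2 i) -
      entropy (fun p : U × (Y × Z) => ∑ i, W' (G i) p.2.1 * S p.1 p.2.2 i)| ≤ M * B := by
    let e : Y × (U × Z) ≃ U × (Y × Z) :=
      ⟨fun q => (q.2.1, (q.1, q.2.2)), fun p => (p.2.1, (p.1, p.2.2)), fun _ => rfl, fun _ => rfl⟩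
    rw [← entropy_comp_equiv e, ← entropy_comp_equiv e]
    have h := abs_entropy_channel_sub_le hW hW' hd hε0 hε1 G
      (S := fun (uz : U × Z) i => S uz.1 uz.2 i) fun uz => hS uz.1 uz.2
    rwa [Fintype.sum_prod_type] at h
  rw [mutInf_eq_entropy (hP hW), mutInf_eq_entropy (hP hW')]
  simp only [hmargU hW, hmargU hW']
  rw [← sub_div, abs_div, abs_of_pos (log_pos one_lt_two)]
  refine div_le_div_of_nonneg_right ?_ (log_pos one_lt_two).le
  calc _ = |(entropy (fun q : Y × Z => ∑ u, ∑ i, W (G i) q.1 * S u q.2 i) -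
          entropy (fun q : Y × Z => ∑ u, ∑ i, W' (G i) q.1 * S u q.2 i)) -
        (entropy (fun p : U × (Y × Z) => ∑ i, W (G i) p.2.1 * S p.1 p.2.2 i) -
          entropy (fun p : U × (Y × Z) => ∑ i, W' (G i) p.2.1 * S p.1 p.2.2 i))| := by
        ring_nf
    _ ≤ M * B + M * B := (abs_sub _ _).trans (add_le_add hY hUY)
    _ = 2 * M * B := by ring

end SingleUse

lemma IsChannel.pi {ι X Y : Type*} [Fintype ι] [DecidableEq ι] [Fintype Y]
    {V : ι → X → Y → ℝ} (hV : ∀ i, IsChannel (V i)) :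
    IsChannel fun (xn : ι → X) (yn : ι → Y) => ∏ i, V i (xn i) (yn i) := fun xn =>
  ⟨fun yn => prod_nonneg fun i _ => (hV i (xn i)).1 _, by
    rw [← Fintype.prod_sum]
    exact prod_eq_one fun i _ => (hV i (xn i)).2⟩

lemma abs_sub_le_card_mul_of_forall_update {ι A : Type*} [Fintype ι] [DecidableEq ι]
    (F : (ι → A) → ℝ) {s : Set A} {a b : A} (ha : a ∈ s) (hb : b ∈ s) {c : ℝ}
    (hF : ∀ V : ι → A, (∀ i, V i ∈ s) → ∀ k, |F (update V k a) - F (update V k b)| ≤ c) :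
    |F (fun _ => a) - F (fun _ => b)| ≤ Fintype.card ι * c := by
  suffices h : ∀ T : Finset ι, |F (fun i => if i ∈ T then a else b) - F (fun _ => b)| ≤ #T * c by
    simpa using h univ
  intro T
  induction T using Finset.induction_on with
  | empty => simp
  | insert k T hk ih =>
    set V : ι → A := fun i => if i ∈ T then a else b
    have hV (i : ι) : V i ∈ s := by by_cases h : i ∈ T <;> simp [V, h, ha, hb]
    have hVa : (fun i => if i ∈ insert k T then a else b) = update V k a := by
      funext i; by_cases h : i = k <;> simp [V, h]
    have hVb : update V k b = V := update_eq_self_iff.2 (by simp [V, hk])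
    calc |F (fun i => if i ∈ insert k T then a else b) - F (fun _ => b)|
        ≤ |F (update V k a) - F (update V k b)| + |F V - F (fun _ => b)| := by
          rw [hVa, hVb]; exact abs_sub_le _ _ _
      _ ≤ c + #T * c := add_le_add (hF V hV k) ih
      _ = #(insert k T) * c := by rw [card_insert_of_notMem hk]; push_cast; ring

section Memoryless

variable {ι X Y U : Type*} [Fintype ι] [DecidableEq ι] [Fintype X] [Fintype U]

/-- `jointOut` with the `i`-th letter sent through the channel `V i`. -/
noncomputable def memorylessJoint (V : ι → X → Y → ℝ) (E : U → (ι → X) → ℝ) :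
    U × (ι → Y) → ℝ :=
  fun p => ∑ xn : ι → X, (∏ i, V i (xn i) (p.2 i)) * E p.1 xn * (Fintype.card U : ℝ)⁻¹

lemma jointOut_eq_memorylessJoint {n : ℕ} (W : X → Y → ℝ) (E : U → (Fin n → X) → ℝ) :
    jointOut n W E = memorylessJoint (fun _ => W) E :=
  rfl

lemma memorylessJoint_update_funSplitAt_symm (V : ι → X → Y → ℝ) (k : ι) (W : X → Y → ℝ)
    (E : U → (ι → X) → ℝ) (u : U) (a : Y) (z : {j // j ≠ k} → Y) :
    memorylessJoint (update V k W) E (u, (Equiv.funSplitAt k Y).symm (a, z)) =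
      ∑ xn, W (xn k) a *
        ((∏ j : {j // j ≠ k}, V j (xn j) (z j)) * E u xn * (Fintype.card U : ℝ)⁻¹) := by
  refine sum_congr rfl fun xn _ => ?_
  dsimp only
  have hprod : ∏ j : {j // j ≠ k}, update V k W j (xn j) ((Equiv.funSplitAt k Y).symm (a, z) j) =
      ∏ j : {j // j ≠ k}, V j (xn j) (z j) :=
    prod_congr rfl fun j _ => by rw [update_of_ne j.2, Equiv.funSplitAt_symm_apply, dif_neg j.2]
  rw [Fintype.prod_eq_mul_prod_subtype_ne _ k, hprod, update_self, Equiv.funSplitAt_symm_apply,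
    dif_pos rfl]
  ring

lemma abs_mutInf_memorylessJoint_update_sub_le [Fintype Y] {W W' : X → Y → ℝ} (hW : IsChannel W)
    (hW' : IsChannel W') {ε : ℝ} (hd : ∀ x, ∑ y, |W x y - W' x y| ≤ ε) (hε0 : 0 ≤ ε)
    (hε1 : ε ≤ 1) {V : ι → X → Y → ℝ} (hV : ∀ i, IsChannel (V i)) {E : U → (ι → X) → ℝ}
    (hE : ∀ u, (∀ xn, 0 ≤ E u xn) ∧ ∑ xn, E u xn = 1) (k : ι) :
    |mutInf (memorylessJoint (update V k W) E) - mutInf (memorylessJoint (update V k W') E)| ≤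
      2 * (2 * ε * log (Fintype.card Y) + binEntropy ε) / log 2 := by
  set S : U → ({j // j ≠ k} → Y) → (ι → X) → ℝ := fun u z xn =>
    (∏ j : {j // j ≠ k}, V j (xn j) (z j)) * E u xn * (Fintype.card U : ℝ)⁻¹
  have hS (u : U) (z : {j // j ≠ k} → Y) : 0 ≤ S u z := fun xn =>
    mul_nonneg (mul_nonneg (prod_nonneg fun j _ => (hV j _).1 _) ((hE u).1 xn)) (by positivity)
  have hmass : ∑ u, ∑ z, ∑ xn, S u z xn ≤ 1 :=
    calc ∑ u, ∑ z, ∑ xn, S u z xn = ∑ _u : U, (Fintype.card U : ℝ)⁻¹ := by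
          refine sum_congr rfl fun u _ => ?_
          rw [sum_comm]
          simp only [S, ← sum_mul, (IsChannel.pi fun j : {j // j ≠ k} => hV j) _ |>.2, one_mul,
            (hE u).2]
      _ ≤ 1 := by
          rw [sum_const, card_univ, nsmul_eq_mul]
          exact mul_inv_le_one
  -- Splitting off the `k`-th output puts the joint law in the single-use form of
  -- `abs_mutInf_channel_sub_le`, with the other outputs as `z`.
  have hJ (W₀ : X → Y → ℝ) : mutInf (memorylessJoint (update V k W₀) E) =
      mutInf (fun p : U × (Y × ({j // j ≠ k} → Y)) => ∑ xn, W₀ (xn k) p.2.1 * S p.1 p.2.2 xn) := by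
    rw [← mutInf_comp_equiv (Equiv.funSplitAt k Y).symm]
    exact congrArg mutInf (funext fun p =>
      memorylessJoint_update_funSplitAt_symm V k W₀ E p.1 p.2.1 p.2.2)
  have hB : 0 ≤ 2 * ε * log (Fintype.card Y) + binEntropy ε := add_nonneg
    (mul_nonneg (by positivity) (log_natCast_nonneg _)) (binEntropy_nonneg hε0 hε1)
  have h := abs_mutInf_channel_sub_le hW hW' hd hε0 hε1 (fun xn : ι → X => xn k) hS
  rw [hJ, hJ]
  refine le_trans h ?_
  gcongr
  linarith [mul_le_mul_of_nonneg_right hmass hB]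

end Memoryless

theorem mutual_information_channel_continuity_general {X Y U : Type*}
    [Fintype X] [Fintype Y] [Fintype U]
    {ε : ℝ} (hε : ε ∈ Set.Ioo (0 : ℝ) 1)
    (W W' : X → Y → ℝ) (hW : IsChannel W) (hW' : IsChannel W')
    (hd : dChan W W' ≤ ε)
    (n : ℕ) (E : U → (Fin n → X) → ℝ)
    (hE : ∀ u, (∀ xn, 0 ≤ E u xn) ∧ ∑ xn : Fin n → X, E u xn = 1) :
    |mutInf (jointOut n W E) - mutInf (jointOut n W' E)| ≤
      (n : ℝ) * (4 * ε * Real.logb 2 (Fintype.card Y) + 4 * H2 ε) := by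
  have hybrid := abs_sub_le_card_mul_of_forall_update
    (fun V => mutInf (memorylessJoint V E)) (s := {V | IsChannel V}) hW hW'
    fun V hV k => abs_mutInf_memorylessJoint_update_sub_le hW hW'
      (fun x => (sum_abs_sub_le_dChan W W' x).trans hd) hε.1.le hε.2.le hV hE k
  have hH2 : 0 ≤ H2 ε := by
    rw [H2_eq_binEntropy_div_log_two]
    exact div_nonneg (binEntropy_nonneg hε.1.le hε.2.le) (log_nonneg one_le_two)
  calc |mutInf (jointOut n W E) - mutInf (jointOut n W' E)|
      ≤ n * (2 * (2 * ε * log (Fintype.card Y) + binEntropy ε) / log 2) := by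
        simpa only [jointOut_eq_memorylessJoint, Fintype.card_fin] using hybrid
    _ = n * (4 * ε * logb 2 (Fintype.card Y) + 2 * H2 ε) := by
        rw [H2_eq_binEntropy_div_log_two, logb]; ring
    _ ≤ n * (4 * ε * logb 2 (Fintype.card Y) + 4 * H2 ε) := by gcongr; linarith

/-- continuity of multi-letter mutual information in the channel. -/
theorem mutual_information_channel_continuity {X Y U : Type*}
    [Fintype X] [Fintype Y] [Fintype U] [Nonempty U]
    {ε : ℝ} (hε : ε ∈ Set.Ioo (0 : ℝ) 1)
    (W W' : X → Y → ℝ) (hW : IsChannel W) (hW' : IsChannel W')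
    (hd : dChan W W' ≤ ε)
    (n : ℕ) (E : U → (Fin n → X) → ℝ)
    (hE : ∀ u, (∀ xn, 0 ≤ E u xn) ∧ ∑ xn : Fin n → X, E u xn = 1) :
    |mutInf (jointOut n W E) - mutInf (jointOut n W' E)| ≤
      (n : ℝ) * (4 * ε * Real.logb 2 (Fintype.card Y) + 4 * H2 ε) :=
  mutual_information_channel_continuity_general hε W W' hW hW' hd n E hE
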